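/- arXiv:2210.13581 — 6 statements merged into one kernel-verified Lean document; each statement's English description precedes it below -/
import Mathlib

section
/- Suppose vectors $v_1, \ldots, v_n \in \mathbb{R}^d$ with $n > d$ satisfy: (1) any choice of $d$ of the vectors is linearly independent, and (2) $0$ lies in the closed convex hull of $\{v_1, \ldots, v_n\}$. Then the open convex hull $\mathrm{conv}(v_1,\ldots,v_n) = \{\sum_{k=1}^n a_k v_k : a_k > 0, \sum_k a_k = 1\}$ is an open subset of $\mathbb{R}^d$ containing $0$. -/
/-!
Lift each `v k` to `(v k, 1) ∈ E × ℝ`. The open convex hull is the slice at height `1` of the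
set of positive combinations of the lifted vectors. Any `d` of the `v k` form a basis, so they
span `E`, and the convex relation at `0` puts `(0, 1)` in the span of the lifts; hence the lifts
span `E × ℝ` and their positive combinations, the image of the open orthant under a surjective
linear map, form an open set.

For `0` itself: the support of the nonnegative relation `b` has at least `d` elements, since
otherwise a `d`-set containing it would carry a nontrivial relation. So the `v k` on the support
of `b` span, giving `e` supported there with `∑ e k • v k = -∑ v k`; then `e + 1 + t • b` is a
relation with positive coefficients once `t` is large.
-/

open scoped BigOperators
open Finset Filter Module Submodule

lemma eventually_forall_pos_add_mul {ι : Type*} [Finite ι] {b c : ι → ℝ} (hb : ∀ k, 0 ≤ b k)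
    (hc : ∀ k, b k = 0 → 0 < c k) : ∀ᶠ t in atTop, ∀ k, 0 < c k + t * b k := by
  refine eventually_all.2 fun k => (hb k).eq_or_lt.elim (fun h => ?_) (fun h => ?_)
  · exact Eventually.of_forall fun t => by simpa [← h] using hc k h.symm
  · exact (tendsto_atTop_add_const_left _ (c k)
      (tendsto_id.atTop_mul_const h)).eventually_gt_atTop 0

section LinearAlgebra

variable {ι E : Type*} [AddCommGroup E] [Module ℝ E] {v : ι → E}

lemma span_image_eq_top_of_finrank_le_card [FiniteDimensional ℝ E]
    (hli : ∀ s : Finset ι, s.card = finrank ℝ E → LinearIndepOn ℝ v s) {S : Finset ι}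
    (hS : finrank ℝ E ≤ S.card) : span ℝ (v '' S) = ⊤ := by
  obtain ⟨T, hTS, hT⟩ := exists_subset_card_eq hS
  have hspan : span ℝ (v '' T) = ⊤ := by
    rw [Set.image_eq_range]
    exact (hli T hT).span_eq_top_of_card_eq_finrank' (by simpa using hT)
  exact top_unique (hspan ▸ span_mono (Set.image_mono (by simpa using hTS)))

variable [Fintype ι]

lemma finrank_le_card_support_of_sum_smul_eq_zero (hdn : finrank ℝ E ≤ Fintype.card ι)
    (hli : ∀ s : Finset ι, s.card = finrank ℝ E → LinearIndepOn ℝ v s) {b : ι → ℝ}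
    (hb : b ≠ 0) (hbv : ∑ k, b k • v k = 0) : finrank ℝ E ≤ #{k | b k ≠ 0} := by
  by_contra! hlt
  obtain ⟨T, hST, hT⟩ := exists_superset_card_eq hlt.le hdn
  have hbT : ∀ k ∉ T, b k = 0 := fun k hk => by
    by_contra h
    exact hk (hST (by simpa using h))
  have hsum : ∑ k ∈ T, b k • v k = 0 := by
    rw [← hbv, sum_subset (subset_univ T) fun k _ hk => by rw [hbT k hk, zero_smul]]
  refine hb (funext fun k => ?_)
  by_cases hk : k ∈ T
  · exact linearIndepOn_finset_iff.1 (hli T hT) b hsum k hk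
  · exact hbT k hk

lemma exists_pos_sum_smul_eq_zero [FiniteDimensional ℝ E] (hdn : finrank ℝ E ≤ Fintype.card ι)
    (hli : ∀ s : Finset ι, s.card = finrank ℝ E → LinearIndepOn ℝ v s) {b : ι → ℝ}
    (hb0 : ∀ k, 0 ≤ b k) (hb : b ≠ 0) (hbv : ∑ k, b k • v k = 0) :
    ∃ w : ι → ℝ, (∀ k, 0 < w k) ∧ ∑ k, w k • v k = 0 := by
  have hspan := span_image_eq_top_of_finrank_le_card hli
    (finrank_le_card_support_of_sum_smul_eq_zero hdn hli hb hbv)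
  obtain ⟨e, he, hev⟩ := (Finsupp.mem_span_image_iff_linearCombination ℝ).1
    (hspan ▸ mem_top (x := -∑ k, v k))
  rw [Finsupp.mem_supported'] at he
  rw [Finsupp.linearCombination_apply, Finsupp.sum_fintype _ _ fun i => zero_smul ℝ (v i)] at hev
  obtain ⟨t, ht⟩ := (eventually_forall_pos_add_mul (c := fun k => e k + 1) hb0
    fun k hk => by simp [he k (by simpa using hk)]).exists
  refine ⟨fun k => e k + 1 + t * b k, ht, ?_⟩
  simp [add_smul, mul_smul, sum_add_distrib, ← smul_sum, hev, hbv]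

lemma span_range_prod_one_eq_top (hv : span ℝ (Set.range v) = ⊤) {b : ι → ℝ}
    (hb1 : ∑ k, b k = 1) (hbv : ∑ k, b k • v k = 0) :
    span ℝ (Set.range fun k => (v k, (1 : ℝ))) = ⊤ := by
  rw [← Fintype.range_linearCombination, LinearMap.range_eq_top]
  rw [← Fintype.range_linearCombination, LinearMap.range_eq_top] at hv
  rintro ⟨y, c⟩
  obtain ⟨e, rfl⟩ := hv y
  refine ⟨fun k => e k + (c - ∑ j, e j) * b k, ?_⟩
  ext
  · simp [Fintype.linearCombination_apply, Prod.fst_sum, add_smul, mul_smul, sum_add_distrib,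
      ← smul_sum, hbv]
  · simp [Fintype.linearCombination_apply, Prod.snd_sum, sum_add_distrib, ← mul_sum, hb1]

end LinearAlgebra

lemma isOpen_setOf_pos_sum_smul {ι F : Type*} [Fintype ι] [AddCommGroup F] [Module ℝ F]
    [TopologicalSpace F] [IsTopologicalAddGroup F] [ContinuousSMul ℝ F] [T2Space F]
    [FiniteDimensional ℝ F] {u : ι → F} (hu : span ℝ (Set.range u) = ⊤) :
    IsOpen {y | ∃ a : ι → ℝ, (∀ k, 0 < a k) ∧ ∑ k, a k • u k = y} := by
  have hsurj : Function.Surjective (Fintype.linearCombination ℝ u) := by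
    rwa [← LinearMap.range_eq_top, Fintype.range_linearCombination]
  have hpos : IsOpen {a : ι → ℝ | ∀ k, 0 < a k} := by
    simpa only [Set.ofPred_forall] using
      isOpen_iInter_of_finite fun k => isOpen_lt continuous_const (continuous_apply k)
  simpa [Set.image, Fintype.linearCombination_apply] using
    (Fintype.linearCombination ℝ u).isOpenMap_of_finiteDimensional hsurj _ hpos

def openConvexHull {ι E : Type*} [Fintype ι] [AddCommGroup E] [Module ℝ E] (v : ι → E) : Set E :=
  {x | ∃ a : ι → ℝ, (∀ k, 0 < a k) ∧ (∑ k, a k) = 1 ∧ (∑ k, a k • v k) = x}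

section OpenConvexHull

variable {ι E : Type*} [Fintype ι] [AddCommGroup E] [Module ℝ E] {v : ι → E}

lemma openConvexHull_eq_preimage :
    openConvexHull v = (fun x => (x, (1 : ℝ))) ⁻¹'
      {y | ∃ a : ι → ℝ, (∀ k, 0 < a k) ∧ ∑ k, a k • (v k, (1 : ℝ)) = y} := by
  ext x
  simp [openConvexHull, Prod.ext_iff, Prod.fst_sum, Prod.snd_sum, and_comm]

lemma isOpen_openConvexHull [TopologicalSpace E] [IsTopologicalAddGroup E] [ContinuousSMul ℝ E]
    [T2Space E] [FiniteDimensional ℝ E] (hv : span ℝ (Set.range v) = ⊤) {b : ι → ℝ}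
    (hb1 : ∑ k, b k = 1) (hbv : ∑ k, b k • v k = 0) : IsOpen (openConvexHull v) := by
  rw [openConvexHull_eq_preimage]
  exact (isOpen_setOf_pos_sum_smul (span_range_prod_one_eq_top hv hb1 hbv)).preimage
    (continuous_id.prodMk continuous_const)

lemma zero_mem_openConvexHull [FiniteDimensional ℝ E] (hdn : finrank ℝ E ≤ Fintype.card ι)
    (hli : ∀ s : Finset ι, s.card = finrank ℝ E → LinearIndepOn ℝ v s) {b : ι → ℝ}
    (hb0 : ∀ k, 0 ≤ b k) (hb1 : ∑ k, b k = 1) (hbv : ∑ k, b k • v k = 0) :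
    0 ∈ openConvexHull v := by
  have hb : b ≠ 0 := fun h => by simp [h] at hb1
  have : Nonempty ι := not_isEmpty_iff.1 fun _ => by simp at hb1
  obtain ⟨w, hw, hwv⟩ := exists_pos_sum_smul_eq_zero hdn hli hb0 hb hbv
  have hσ : 0 < ∑ k, w k := sum_pos (fun k _ => hw k) univ_nonempty
  refine ⟨fun k => (∑ j, w j)⁻¹ * w k, fun k => mul_pos (inv_pos.2 hσ) (hw k), ?_, ?_⟩
  · rw [← mul_sum, inv_mul_cancel₀ hσ.ne']
  · simp only [mul_smul, ← smul_sum, hwv, smul_zero]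

end OpenConvexHull

/-- if any `d` of the vectors `v 1, …, v n` (with `n > d`) are linearly
independent and `0` lies in the closed convex hull, then the open convex hull is an
open set containing `0`. -/
theorem stmt_1 {d n : ℕ} (hdn : d < n)
    (v : Fin n → EuclideanSpace ℝ (Fin d))
    (hli : ∀ s : Finset (Fin n), s.card = d → LinearIndependent ℝ (fun i : s => v i))
    (h0 : ∃ a : Fin n → ℝ, (∀ k, 0 ≤ a k) ∧ (∑ k, a k) = 1 ∧ (∑ k, a k • v k) = 0) :
    IsOpen {x : EuclideanSpace ℝ (Fin d) |
        ∃ a : Fin n → ℝ, (∀ k, 0 < a k) ∧ (∑ k, a k) = 1 ∧ (∑ k, a k • v k) = x} ∧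
      (0 : EuclideanSpace ℝ (Fin d)) ∈ {x : EuclideanSpace ℝ (Fin d) |
        ∃ a : Fin n → ℝ, (∀ k, 0 < a k) ∧ (∑ k, a k) = 1 ∧ (∑ k, a k • v k) = x} := by
  obtain ⟨b, hb0, hb1, hbv⟩ := h0
  have hdn' : finrank ℝ (EuclideanSpace ℝ (Fin d)) ≤ Fintype.card (Fin n) := by simpa using hdn.le
  have hli' : ∀ s : Finset (Fin n), s.card = finrank ℝ (EuclideanSpace ℝ (Fin d)) →
      LinearIndepOn ℝ v s := fun s hs => hli s (by simpa using hs)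
  have hspan : span ℝ (Set.range v) = ⊤ := by
    simpa using span_image_eq_top_of_finrank_le_card hli' (S := univ) (by simpa using hdn')
  exact ⟨isOpen_openConvexHull hspan hb1 hbv, zero_mem_openConvexHull hdn' hli' hb0 hb1 hbv⟩
end

section
/- Let $\chi$ be a separable metric space with a $\sigma$-finite Borel measure $\Lambda$ of full support. Suppose $(f_n)_{n \ge 1}$ is a sequence in $L^\infty(\Lambda)$ converging in $L^\infty(\Lambda)$ to $f$, and each $f_n$ has a bounded, non-negative, lower semicontinuous version $u_n$. Then $f$ has a bounded, non-negative, lower semicontinuous version $u$ which is maximal: any other bounded non-negative lower semicontinuous version $\tilde{u}$ of $f$ satisfies $\tilde{u}(x) \le u(x)$ for all $x \in \chi$. -/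
open MeasureTheory

/-- A lower semicontinuous function that is a.e. `≤ c` w.r.t. a fully supported measure
is everywhere `≤ c`. -/
private lemma lsc_ae_le_of_full_support {χ : Type*} [MetricSpace χ]
    [MeasurableSpace χ] [BorelSpace χ]
    (Λ : Measure χ) (hsupp : ∀ U : Set χ, IsOpen U → U.Nonempty → 0 < Λ U)
    {h : χ → ℝ} (hl : LowerSemicontinuous h) {c : ℝ} (hc : ∀ᵐ x ∂Λ, h x ≤ c) :
    ∀ x, h x ≤ c := by
  by_contra hcon
  push_neg at hcon
  obtain ⟨x, hx⟩ := hcon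
  have hopen : IsOpen (h ⁻¹' Set.Ioi c) := hl.isOpen_preimage c
  have hpos := hsupp _ hopen ⟨x, hx⟩
  have hnull : Λ (h ⁻¹' Set.Ioi c) = 0 := by
    apply measure_mono_null _ (ae_iff.mp hc)
    intro y hy
    simpa using not_le.mpr hy
  rw [hnull] at hpos
  exact lt_irrefl _ hpos

private lemma lsc_max_zero {χ : Type*} [TopologicalSpace χ] {h : χ → ℝ}
    (hl : LowerSemicontinuous h) : LowerSemicontinuous (fun x => max (h x) 0) := by
  rw [lowerSemicontinuous_iff_isOpen_preimage] at hl ⊢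
  intro y
  have : (fun x => max (h x) 0) ⁻¹' Set.Ioi y
      = (h ⁻¹' Set.Ioi y) ∪ (if y < 0 then Set.univ else ∅) := by
    ext x
    by_cases hy : y < 0 <;> simp [hy, lt_max_iff]
  rw [this]
  apply (hl y).union
  split <;> simp [isOpen_univ]

/-- an `L^∞(Λ)` limit of functions admitting bounded non-negative lower
semicontinuous versions admits a maximal bounded non-negative lower semicontinuous
version, provided `Λ` is σ-finite with full support on a separable metric space. -/
theorem stmt_3 {χ : Type*} [MetricSpace χ] [TopologicalSpace.SeparableSpace χ]
    [MeasurableSpace χ] [BorelSpace χ]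
    (Λ : Measure χ) [SigmaFinite Λ]
    (hsupp : ∀ U : Set χ, IsOpen U → U.Nonempty → 0 < Λ U)
    (f : χ → ℝ) (fn : ℕ → χ → ℝ) (un : ℕ → χ → ℝ)
    (hver : ∀ n, fn n =ᵐ[Λ] un n)
    (hlsc : ∀ n, LowerSemicontinuous (un n))
    (hbd : ∀ n, ∃ C, ∀ x, un n x ≤ C)
    (hnn : ∀ n, ∀ x, 0 ≤ un n x)
    (hconv : ∀ ε : ℝ, 0 < ε → ∃ N, ∀ n ≥ N, ∀ᵐ x ∂Λ, |fn n x - f x| ≤ ε) :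
    ∃ u : χ → ℝ, u =ᵐ[Λ] f ∧ LowerSemicontinuous u ∧ (∃ C, ∀ x, u x ≤ C) ∧
      (∀ x, 0 ≤ u x) ∧
      ∀ u' : χ → ℝ, u' =ᵐ[Λ] f → LowerSemicontinuous u' → (∃ C, ∀ x, u' x ≤ C) →
        (∀ x, 0 ≤ u' x) → ∀ x, u' x ≤ u x := by
  haveI : SecondCountableTopology χ := UniformSpace.secondCountable_of_separable χ
  -- Step 1: extract a fast subsequence
  have hseq : ∀ k : ℕ, ∃ n, ∀ᵐ x ∂Λ, |fn n x - f x| ≤ 1 / ((k : ℝ) + 1) := by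
    intro k
    obtain ⟨N, hN⟩ := hconv (1 / ((k : ℝ) + 1)) (by positivity)
    exact ⟨N, hN N le_rfl⟩
  choose g hg using hseq
  -- the full-measure set of good points
  have hE : ∀ᵐ x ∂Λ, ∀ k : ℕ,
      fn (g k) x = un (g k) x ∧ |fn (g k) x - f x| ≤ 1 / ((k : ℝ) + 1) :=
    ae_all_iff.mpr fun k => (hver (g k)).and (hg k)
  -- Step 2: bounds on f
  obtain ⟨C0, hC0⟩ := hbd (g 0)
  set B : ℝ := max (C0 + 1) 0 with hBdef
  have hfB : ∀ᵐ x ∂Λ, f x ≤ B := by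
    filter_upwards [hE] with x hx
    obtain ⟨h1, h2⟩ := hx 0
    have h3 := abs_le.1 h2
    have : f x ≤ fn (g 0) x + 1 := by push_cast at h3 ⊢; linarith [h3.1]
    calc f x ≤ fn (g 0) x + 1 := this
      _ = un (g 0) x + 1 := by rw [h1]
      _ ≤ C0 + 1 := by linarith [hC0 x]
      _ ≤ B := le_max_left _ _
  have hf0 : ∀ᵐ x ∂Λ, 0 ≤ f x := by
    filter_upwards [hE] with x hx
    by_contra hneg
    push_neg at hneg
    obtain ⟨k, hk⟩ := exists_nat_one_div_lt (show (0:ℝ) < -f x by linarith)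
    obtain ⟨h1, h2⟩ := hx k
    have h3 := abs_le.1 h2
    have h4 := hnn (g k) x
    rw [h1] at h3
    linarith [h3.1]
  -- Step 3: any lsc a.e.-version of f is ≤ B everywhere
  have key : ∀ w : χ → ℝ, w =ᵐ[Λ] f → LowerSemicontinuous w → ∀ x, w x ≤ B := by
    intro w hw hwl
    refine lsc_ae_le_of_full_support Λ hsupp hwl ?_
    filter_upwards [hw, hfB] with x h1 h2
    rw [h1]; exact h2
  -- Step 4: uniform bound on the subsequence
  have huB : ∀ k x, un (g k) x ≤ B + 1 := by
    intro k
    refine lsc_ae_le_of_full_support Λ hsupp (hlsc (g k)) ?_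
    filter_upwards [hE, hfB] with x hx hfx
    obtain ⟨h1, h2⟩ := hx k
    have h3 := abs_le.1 h2
    have hk1 : 1 / ((k : ℝ) + 1) ≤ 1 := by
      rw [div_le_one (by positivity)]; simp
    rw [h1] at h3
    linarith [h3.2]
  -- Step 5: construct one lsc version of f
  set vs : χ → ℝ := fun x => ⨆ k : ℕ, (un (g k) x - 2 / ((k : ℝ) + 1)) with hvsdef
  have hbddv : ∀ x, BddAbove (Set.range fun k : ℕ => un (g k) x - 2 / ((k : ℝ) + 1)) := by
    intro x
    refine ⟨B + 1, ?_⟩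
    rintro y ⟨k, rfl⟩
    have : (0:ℝ) < 2 / ((k : ℝ) + 1) := by positivity
    linarith [huB k x]
  have hvslsc : LowerSemicontinuous vs := by
    rw [lowerSemicontinuous_iff_isOpen_preimage]
    intro y
    have : vs ⁻¹' Set.Ioi y = ⋃ k : ℕ, (un (g k)) ⁻¹' Set.Ioi (y + 2 / ((k : ℝ) + 1)) := by
      ext x
      simp only [Set.mem_preimage, Set.mem_Ioi, Set.mem_iUnion, hvsdef]
      rw [lt_ciSup_iff (hbddv x)]
      constructor
      · rintro ⟨k, hk⟩; exact ⟨k, by linarith⟩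
      · rintro ⟨k, hk⟩; exact ⟨k, by linarith⟩
    rw [this]
    exact isOpen_iUnion fun k => (hlsc (g k)).isOpen_preimage _
  have hvsf : vs =ᵐ[Λ] f := by
    filter_upwards [hE] with x hx
    have hub : ∀ k : ℕ, un (g k) x - 2 / ((k : ℝ) + 1) ≤ f x := by
      intro k
      obtain ⟨h1, h2⟩ := hx k
      have h3 := abs_le.1 h2
      have : (0:ℝ) < 1 / ((k : ℝ) + 1) := by positivity
      rw [h1] at h3
      have h2k : 2 / ((k : ℝ) + 1) = 2 * (1 / ((k : ℝ) + 1)) := by ring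
      rw [h2k]
      linarith [h3.2]
    have hlb : ∀ k : ℕ, f x - 3 * (1 / ((k : ℝ) + 1)) ≤ vs x := by
      intro k
      obtain ⟨h1, h2⟩ := hx k
      have h3 := abs_le.1 h2
      rw [h1] at h3
      have hle := le_ciSup (hbddv x) k
      have h2k : 2 / ((k : ℝ) + 1) = 2 * (1 / ((k : ℝ) + 1)) := by ring
      rw [hvsdef]
      rw [h2k] at hle
      linarith [h3.1]
    refine le_antisymm (ciSup_le hub) ?_
    by_contra hcon
    push_neg at hcon
    obtain ⟨k, hk⟩ := exists_nat_one_div_lt (show (0:ℝ) < (f x - vs x) / 3 by linarith)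
    have := hlb k
    linarith
  set u0 : χ → ℝ := fun x => max (vs x) 0 with hu0def
  have hu0lsc : LowerSemicontinuous u0 := lsc_max_zero hvslsc
  have hu0f : u0 =ᵐ[Λ] f := by
    filter_upwards [hvsf, hf0] with x h1 h2
    rw [hu0def]
    simp only []
    rw [h1, max_eq_left h2]
  -- Step 6: family of all lsc versions, and its sup
  set S : Set (χ → ℝ) := {w | w =ᵐ[Λ] f ∧ LowerSemicontinuous w} with hSdef
  have hu0S : u0 ∈ S := ⟨hu0f, hu0lsc⟩
  haveI : Nonempty S := ⟨⟨u0, hu0S⟩⟩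
  have hSB : ∀ w : S, ∀ x, (w : χ → ℝ) x ≤ B := fun w x => key w w.2.1 w.2.2 x
  set U : χ → ℝ := fun x => ⨆ w : S, (w : χ → ℝ) x with hUdef
  have hbddU : ∀ x, BddAbove (Set.range fun w : S => (w : χ → ℝ) x) := by
    intro x
    refine ⟨B, ?_⟩
    rintro y ⟨w, rfl⟩
    exact hSB w x
  have hmem_le : ∀ w ∈ S, ∀ x, w x ≤ U x := by
    intro w hw x
    exact le_ciSup (hbddU x) (⟨w, hw⟩ : S)
  have hUlsc : LowerSemicontinuous U := by
    rw [lowerSemicontinuous_iff_isOpen_preimage]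
    intro y
    have : U ⁻¹' Set.Ioi y = ⋃ w : S, ((w : χ → ℝ) ⁻¹' Set.Ioi y) := by
      ext x
      simp only [Set.mem_preimage, Set.mem_Ioi, Set.mem_iUnion, hUdef]
      rw [lt_ciSup_iff (hbddU x)]
    rw [this]
    exact isOpen_iUnion fun w => w.2.2.isOpen_preimage _
  have hUB : ∀ x, U x ≤ B := fun x => ciSup_le fun w => hSB w x
  have hU0 : ∀ x, 0 ≤ u0 x := fun x => le_max_right _ _
  have hU0' : ∀ x, 0 ≤ U x := fun x => le_trans (hU0 x) (hmem_le u0 hu0S x)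
  -- Step 7: U is a version of f (countable basis argument)
  obtain ⟨b, hbc, -, hbasis⟩ := TopologicalSpace.exists_countable_basis χ
  have hUf : U =ᵐ[Λ] f := by
    have hge : ∀ᵐ x ∂Λ, f x ≤ U x := by
      filter_upwards [hu0f] with x h1
      rw [← h1]; exact hmem_le u0 hu0S x
    have hle : ∀ᵐ x ∂Λ, U x ≤ f x := by
      set J : Set (Set χ × ℚ) :=
        {p | p.1 ∈ b ∧ ∃ w ∈ S, ∀ y ∈ p.1, (p.2 : ℝ) < w y} with hJdef
      have hJc : J.Countable := by
        have : J ⊆ b ×ˢ (Set.univ : Set ℚ) := by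
          rintro ⟨s, q⟩ hp
          exact ⟨hp.1, Set.mem_univ _⟩
        exact (hbc.prod Set.countable_univ).mono this
      have hnull : ∀ p ∈ J, Λ {x | x ∈ p.1 ∧ f x < (p.2 : ℝ)} = 0 := by
        rintro ⟨s, q⟩ ⟨hs, w, hwS, hw⟩
        apply measure_mono_null _ (ae_iff.mp hwS.1)
        rintro x ⟨hx1, hx2⟩
        intro hcon
        have := hw x hx1
        rw [hcon] at this
        linarith
      have hsub : {x | f x < U x} ⊆ ⋃ p ∈ J, {x | x ∈ p.1 ∧ f x < (p.2 : ℝ)} := by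
        intro x hx
        have hx' : f x < ⨆ w : S, (w : χ → ℝ) x := hx
        rw [lt_ciSup_iff (hbddU x)] at hx'
        obtain ⟨⟨w, hwS⟩, hwx⟩ := hx'
        obtain ⟨q, hq1, hq2⟩ := exists_rat_btwn hwx
        have hxopen : x ∈ (w ⁻¹' Set.Ioi (q : ℝ)) := hq2
        obtain ⟨s, hsb, hxs, hss⟩ :=
          hbasis.exists_subset_of_mem_open hxopen (hwS.2.isOpen_preimage _)
        refine Set.mem_biUnion (show ((s, q) : Set χ × ℚ) ∈ J from ?_) ⟨hxs, hq1⟩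
        exact ⟨hsb, w, hwS, fun y hy => hss hy⟩
      have : Λ {x | f x < U x} = 0 := by
        apply measure_mono_null hsub
        exact (measure_biUnion_null_iff hJc).mpr hnull
      rw [ae_iff]
      apply measure_mono_null _ this
      intro x hx
      exact not_le.mp hx
    filter_upwards [hge, hle] with x h1 h2
    exact le_antisymm h2 h1
  -- conclusion
  refine ⟨U, hUf, hUlsc, ⟨B, hUB⟩, hU0', ?_⟩
  intro u' hu'f hu'lsc _ _ x
  exact hmem_le u' ⟨hu'f, hu'lsc⟩ x
end

section
/- Suppose there exist $\beta \in \mathcal{P}(\pi)$ and a function $\epsilon : [0,\infty) \to [0,\infty)$ with $\sup_{\mu \in \mathcal{P}(\pi)} \|\mu T_t - \beta\|_{TV} \le \epsilon(t)$ for all $t$. Then, setting $\phi := d\beta/d\pi$, for every $\mu \in \mathcal{P}_\infty(\pi)$ and $t \ge 0$, $\big\| \lambda^{-t}\frac{d(\mu P_t)}{d\pi} - \mu(\phi) \big\|_{L^\infty(\pi)} \le \epsilon(t)\cdot \frac{\mathrm{osc}_\pi(\mu)}{2}$, where $\mathrm{osc}_\pi(\mu) = \mathrm{ess\,sup}_\pi(d\mu/d\pi)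 - \mathrm{ess\,inf}_\pi(d\mu/d\pi)$. -/
open MeasureTheory ProbabilityTheory
open scoped ENNReal NNReal

/-!
For a measurable set `A` with `π A > 0`, the total variation bound tested on the probability
density `𝟙_A / π A` says that `u_A := λ⁻ᵗ P_t 𝟙_A - π(A) φ` has `L¹(π)`-norm at most `π(A) ε(t)`,
while quasi-stationarity gives `∫ u_A dπ = 0`. Since `λ⁻ᵗ (μP_t)(A) - μ(φ) π(A) = ∫ g u_A dπ`,
we may replace `g` by `g - (m + M) / 2`, which is bounded by `(M - m) / 2`. The signed measure
`λ⁻ᵗ μP_t - μ(φ) π` is thus bounded by `ε(t) (M - m) / 2 · π` on every set, and so is its density.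
-/

section General

variable {α : Type*} [MeasurableSpace α] {μ : Measure α}

theorem ae_abs_le_of_forall_abs_setIntegral_le [IsFiniteMeasure μ] {f : α → ℝ} {C : ℝ}
    (hf : Integrable f μ) (h : ∀ s, MeasurableSet s → |∫ x in s, f x ∂μ| ≤ C * μ.real s) :
    ∀ᵐ x ∂μ, |f x| ≤ C := by
  have hC : Integrable (fun _ ↦ C) μ := integrable_const C
  have hle : f ≤ᵐ[μ] fun _ ↦ C := ae_le_of_forall_setIntegral_le hf hC fun s hs _ ↦ by
    rw [setIntegral_const, smul_eq_mul, mul_comm]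
    exact (le_abs_self _).trans (h s hs)
  have hge : -f ≤ᵐ[μ] fun _ ↦ C := ae_le_of_forall_setIntegral_le hf.neg hC fun s hs _ ↦ by
    rw [setIntegral_const, smul_eq_mul, mul_comm, Pi.neg_def, integral_neg]
    exact (neg_le_abs _).trans (h s hs)
  filter_upwards [hle, hge] with x h₁ h₂
  exact abs_le.mpr ⟨by rw [Pi.neg_apply] at h₂; linarith, h₁⟩

theorem ae_abs_mul_toReal_rnDeriv_sub_le [IsFiniteMeasure μ] {ν : Measure α} [IsFiniteMeasure ν]
    (hνμ : ν ≪ μ) {r c C : ℝ}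
    (h : ∀ s, MeasurableSet s → |r * ν.real s - c * μ.real s| ≤ C * μ.real s) :
    ∀ᵐ x ∂μ, |r * (ν.rnDeriv μ x).toReal - c| ≤ C := by
  have hi : Integrable (fun x ↦ (ν.rnDeriv μ x).toReal) μ := Measure.integrable_toReal_rnDeriv
  refine ae_abs_le_of_forall_abs_setIntegral_le ((hi.const_mul r).sub (integrable_const c))
    fun s hs ↦ ?_
  rw [integral_sub (hi.integrableOn.const_mul r) (integrableOn_const (measure_ne_top μ s)),
    integral_const_mul, Measure.setIntegral_toReal_rnDeriv hνμ, setIntegral_const, smul_eq_mul,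
    mul_comm _ c]
  exact h s hs

theorem abs_integral_mul_le_of_integral_eq_zero {g u : α → ℝ} {m M : ℝ}
    (hg : AEStronglyMeasurable g μ) (hgmM : ∀ᵐ x ∂μ, m ≤ g x ∧ g x ≤ M)
    (hu : Integrable u μ) (hu0 : ∫ x, u x ∂μ = 0) :
    |∫ x, g x * u x ∂μ| ≤ (M - m) / 2 * ∫ x, |u x| ∂μ := by
  set a := (m + M) / 2 with ha
  have hgu : Integrable (fun x ↦ g x * u x) μ :=
    hu.bdd_mul hg (c := max |m| |M|) (by
      filter_upwards [hgmM] with x hx using abs_le_max_abs_abs hx.1 hx.2)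
  have hcentre : ∫ x, g x * u x ∂μ = ∫ x, (g x - a) * u x ∂μ := by
    simp only [sub_mul]
    rw [integral_sub hgu (hu.const_mul a), integral_const_mul, hu0, mul_zero, sub_zero]
  rw [hcentre, ← integral_const_mul ((M - m) / 2) fun x ↦ |u x|, ← Real.norm_eq_abs]
  refine norm_integral_le_of_norm_le (hu.abs.const_mul _) ?_
  filter_upwards [hgmM] with x hx
  rw [Real.norm_eq_abs, abs_mul]
  refine mul_le_mul_of_nonneg_right (abs_le.mpr ⟨?_, ?_⟩) (abs_nonneg _) <;>
    linarith [hx.1, hx.2, ha]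

end General

section Kernel

variable {α β : Type*} [MeasurableSpace α] [MeasurableSpace β] {π : Measure α}

theorem measureReal_comp_withDensity_ofReal {κ : Kernel α β} [IsFiniteKernel κ] {g : α → ℝ}
    (hg : Measurable g) (hg0 : 0 ≤ᵐ[π] g) {s : Set β} (hs : MeasurableSet s) :
    (κ ∘ₘ π.withDensity fun x ↦ ENNReal.ofReal (g x)).real s = ∫ x, g x * (κ x).real s ∂π := by
  rw [measureReal_def, Measure.bind_apply hs κ.aemeasurable,
    lintegral_withDensity_eq_lintegral_mul _ hg.ennreal_ofReal (κ.measurable_coe hs),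
    ← integral_toReal ((hg.ennreal_ofReal.mul (κ.measurable_coe hs)).aemeasurable)
      (ae_of_all _ fun x ↦ ENNReal.mul_lt_top ENNReal.ofReal_lt_top (measure_lt_top _ _))]
  refine integral_congr_ae ?_
  filter_upwards [hg0] with x hx
  simp [ENNReal.toReal_mul, ENNReal.toReal_ofReal hx, measureReal_def]

theorem integrable_measureReal_apply [IsFiniteMeasure π] (κ : Kernel α β) [IsFiniteKernel κ]
    {s : Set β} (hs : MeasurableSet s) : Integrable (fun x ↦ (κ x).real s) π :=
  integrable_toReal_of_lintegral_ne_top (κ.measurable_coe hs).aemeasurable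
    (by rw [← Measure.bind_apply hs κ.aemeasurable]; exact measure_ne_top _ _)

variable {κ : Kernel α α} {L : ℝ}

theorem integral_measureReal_apply_of_comp_eq_smul [IsFiniteKernel κ]
    (hκπ : κ ∘ₘ π = ENNReal.ofReal L • π) (hL : 0 ≤ L) {s : Set α} (hs : MeasurableSet s) :
    ∫ x, (κ x).real s ∂π = L * π.real s := by
  simp only [measureReal_def]
  rw [integral_toReal (κ.measurable_coe hs).aemeasurable
      (ae_of_all _ fun x ↦ measure_lt_top _ _), ← Measure.bind_apply hs κ.aemeasurable, hκπ,
    Measure.smul_apply, smul_eq_mul, ENNReal.toReal_mul, ENNReal.toReal_ofReal hL]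

theorem comp_withDensity_absolutelyContinuous_of_comp_eq_smul {c : ℝ≥0∞}
    (hκπ : κ ∘ₘ π = c • π) (f : α → ℝ≥0∞) : κ ∘ₘ π.withDensity f ≪ π :=
  ((withDensity_absolutelyContinuous π f).comp_right κ).trans
    (hκπ ▸ Measure.AbsolutelyContinuous.rfl.smul_left c)

theorem integral_abs_measureReal_sub_le [IsFiniteMeasure π] {ε : ℝ} {φ : α → ℝ}
    (hTV : ∀ g : α → ℝ, Measurable g → Integrable g π → (∀ᵐ x ∂π, 0 ≤ g x) →
      ∫ x, g x ∂π = 1 → ∫ x, |L⁻¹ * (∫ y, g y ∂(κ x)) - φ x| ∂π ≤ ε)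
    {s : Set α} (hs : MeasurableSet s) (hπs : π s ≠ 0) :
    ∫ x, |L⁻¹ * (κ x).real s - π.real s * φ x| ∂π ≤ π.real s * ε := by
  set p := π.real s
  have hp : 0 < p := ENNReal.toReal_pos hπs (measure_ne_top π s)
  have hTVs := hTV (fun x ↦ p⁻¹ * s.indicator 1 x)
    ((measurable_one.indicator hs).const_mul p⁻¹)
    (((integrable_const (1 : ℝ)).indicator hs).const_mul p⁻¹)
    (ae_of_all _ fun x ↦ mul_nonneg (inv_nonneg.mpr hp.le) (Set.indicator_nonneg (by simp) x))
    (by rw [integral_const_mul, integral_indicator_one hs, inv_mul_cancel₀ hp.ne'])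
  simp only [integral_const_mul, integral_indicator_one hs] at hTVs
  calc ∫ x, |L⁻¹ * (κ x).real s - p * φ x| ∂π
      = ∫ x, p * |L⁻¹ * (p⁻¹ * (κ x).real s) - φ x| ∂π := by
        refine integral_congr_ae (ae_of_all _ fun x ↦ ?_)
        dsimp only
        rw [show L⁻¹ * (κ x).real s - p * φ x = p * (L⁻¹ * (p⁻¹ * (κ x).real s) - φ x) by
          field_simp, abs_mul, abs_of_pos hp]
    _ ≤ p * ε := by
        rw [integral_const_mul]
        exact mul_le_mul_of_nonneg_left hTVs hp.le

theorem abs_measureReal_comp_withDensity_sub_le [IsFiniteMeasure π] [IsFiniteKernel κ]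
    {ε m M : ℝ} {φ g : α → ℝ} (hL : 0 < L) (hκπ : κ ∘ₘ π = ENNReal.ofReal L • π)
    (hφ : Integrable φ π) (hφ1 : ∫ x, φ x ∂π = 1)
    (hTV : ∀ g : α → ℝ, Measurable g → Integrable g π → (∀ᵐ x ∂π, 0 ≤ g x) →
      ∫ x, g x ∂π = 1 → ∫ x, |L⁻¹ * (∫ y, g y ∂(κ x)) - φ x| ∂π ≤ ε)
    (hg : Measurable g) (hg0 : 0 ≤ᵐ[π] g) (hgmM : ∀ᵐ x ∂π, m ≤ g x ∧ g x ≤ M)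
    {s : Set α} (hs : MeasurableSet s) :
    |L⁻¹ * (κ ∘ₘ π.withDensity fun x ↦ ENNReal.ofReal (g x)).real s
        - (∫ x, φ x * g x ∂π) * π.real s| ≤ ε * ((M - m) / 2) * π.real s := by
  by_cases hπs : π s = 0
  · have hνs := comp_withDensity_absolutelyContinuous_of_comp_eq_smul hκπ
      (fun x ↦ ENNReal.ofReal (g x)) hπs
    simp [measureReal_def, hνs, hπs]
  have hmM : m ≤ M := by
    have : (ae π).NeBot := ae_neBot.mpr fun h ↦ hπs (by simp [h])
    obtain ⟨x, hx⟩ := hgmM.exists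
    exact hx.1.trans hx.2
  set p := π.real s
  set u : α → ℝ := fun x ↦ L⁻¹ * (κ x).real s - p * φ x
  have hk := integrable_measureReal_apply (π := π) κ hs
  have hu : Integrable u π := (hk.const_mul _).sub (hφ.const_mul _)
  have hu0 : ∫ x, u x ∂π = 0 := by
    rw [integral_sub (hk.const_mul _) (hφ.const_mul _), integral_const_mul, integral_const_mul,
      integral_measureReal_apply_of_comp_eq_smul hκπ hL.le hs, hφ1]
    field_simp
    ring
  have hgbdd : ∀ᵐ x ∂π, ‖g x‖ ≤ max |m| |M| := by
    filter_upwards [hgmM] with x hx using abs_le_max_abs_abs hx.1 hx.2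
  have hgk := hk.bdd_mul hg.aestronglyMeasurable hgbdd
  have hgφ := hφ.bdd_mul hg.aestronglyMeasurable hgbdd
  have hgu : ∫ x, g x * u x ∂π
      = L⁻¹ * (κ ∘ₘ π.withDensity fun x ↦ ENNReal.ofReal (g x)).real s
        - (∫ x, φ x * g x ∂π) * p := by
    simp only [u, mul_sub, mul_left_comm (g _)]
    rw [integral_sub (hgk.const_mul _) (hgφ.const_mul _), integral_const_mul, integral_const_mul,
      measureReal_comp_withDensity_ofReal hg hg0 hs]
    simp only [mul_comm (φ _)]
    ring
  calc _ = |∫ x, g x * u x ∂π| := by rw [hgu]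
    _ ≤ (M - m) / 2 * ∫ x, |u x| ∂π :=
        abs_integral_mul_le_of_integral_eq_zero hg.aestronglyMeasurable hgmM hu hu0
    _ ≤ (M - m) / 2 * (p * ε) := mul_le_mul_of_nonneg_left
        (integral_abs_measureReal_sub_le hTV hs hπs) (by linarith)
    _ = ε * ((M - m) / 2) * p := by ring

end Kernel

theorem stmt_9_general {χ : Type*} [MeasurableSpace χ]
    (P : ℝ → Kernel χ χ)
    (hPsub : ∀ t x, P t x Set.univ ≤ 1)
    (π : Measure χ) [IsProbabilityMeasure π]
    (l : ℝ) (hl0 : 0 < l)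
    (hQSD : ∀ t : ℝ, 0 ≤ t → π.bind (fun x => P t x) = ENNReal.ofReal (l ^ t) • π)
    (β : Measure χ) [IsProbabilityMeasure β] (hβac : β ≪ π)
    (φ : χ → ℝ) (hφ : φ =ᵐ[π] fun x => (β.rnDeriv π x).toReal)
    (ε : ℝ → ℝ)
    (hTV : ∀ t : ℝ, 0 ≤ t → ∀ g : χ → ℝ, Measurable g → Integrable g π →
      (∀ᵐ x ∂π, 0 ≤ g x) → ∫ x, g x ∂π = 1 →
      ∫ x, |(l ^ t)⁻¹ * (∫ y, g y ∂(P t x)) - φ x| ∂π ≤ ε t) :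
    ∀ t : ℝ, 0 ≤ t → ∀ g : χ → ℝ, Measurable g → (∀ᵐ x ∂π, 0 ≤ g x) →
      ∫ x, g x ∂π = 1 → ∀ m M : ℝ, (∀ᵐ x ∂π, m ≤ g x ∧ g x ≤ M) →
      ∀ᵐ y ∂π,
        |(l ^ t)⁻¹ * (((π.withDensity fun x => ENNReal.ofReal (g x)).bind
            (fun x => P t x)).rnDeriv π y).toReal - ∫ x, φ x * g x ∂π|
          ≤ ε t * ((M - m) / 2) := by
  intro t ht g hg hg0 hg1 m M hgmM
  have : IsFiniteKernel (P t) := ⟨⟨1, ENNReal.one_lt_top, hPsub t⟩⟩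
  have : IsFiniteMeasure (π.withDensity fun x ↦ ENNReal.ofReal (g x)) :=
    isFiniteMeasure_withDensity_ofReal (Integrable.of_integral_ne_zero (by simp [hg1])).2
  have hφi : Integrable φ π := Measure.integrable_toReal_rnDeriv.congr hφ.symm
  have hφ1 : ∫ x, φ x ∂π = 1 := by
    rw [integral_congr_ae hφ, Measure.integral_toReal_rnDeriv hβac, probReal_univ]
  exact ae_abs_mul_toReal_rnDeriv_sub_le
    (comp_withDensity_absolutelyContinuous_of_comp_eq_smul (hQSD t ht) _) fun s hs ↦
    abs_measureReal_comp_withDensity_sub_le (Real.rpow_pos_of_pos hl0 t) (hQSD t ht) hφi hφ1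
      (hTV t ht) hg hg0 hgmM hs

/-- total variation convergence of `μ T_t = T_t^† μ = (λ^{-t} P_t(dμ/dπ))π`
to `β = φ π` at rate `ε(t)` (expressed via `L¹(π)` distances of densities) implies, for
any initial condition `μ = g π ∈ 𝒫_∞(π)` with `m ≤ g ≤ M` a.e.,
`‖λ^{-t} d(μP_t)/dπ - μ(φ)‖_{L^∞(π)} ≤ ε(t) · (M - m)/2`. -/
theorem stmt_9 {χ : Type*} [MeasurableSpace χ]
    (P : ℝ → Kernel χ χ) [∀ t, IsSFiniteKernel (P t)]
    (hPsub : ∀ t x, P t x Set.univ ≤ 1)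
    (π : Measure χ) [IsProbabilityMeasure π]
    (l : ℝ) (hl0 : 0 < l) (hl1 : l ≤ 1)
    (hQSD : ∀ t : ℝ, 0 ≤ t → π.bind (fun x => P t x) = ENNReal.ofReal (l ^ t) • π)
    (β : Measure χ) [IsProbabilityMeasure β] (hβac : β ≪ π)
    (φ : χ → ℝ) (hφ : φ =ᵐ[π] fun x => (β.rnDeriv π x).toReal)
    (ε : ℝ → ℝ) (hε : ∀ t, 0 ≤ ε t)
    (hTV : ∀ t : ℝ, 0 ≤ t → ∀ g : χ → ℝ, Measurable g → Integrable g π →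
      (∀ᵐ x ∂π, 0 ≤ g x) → ∫ x, g x ∂π = 1 →
      ∫ x, |(l ^ t)⁻¹ * (∫ y, g y ∂(P t x)) - φ x| ∂π ≤ ε t) :
    ∀ t : ℝ, 0 ≤ t → ∀ g : χ → ℝ, Measurable g → (∀ᵐ x ∂π, 0 ≤ g x) →
      ∫ x, g x ∂π = 1 → ∀ m M : ℝ, (∀ᵐ x ∂π, m ≤ g x ∧ g x ≤ M) →
      ∀ᵐ y ∂π,
        |(l ^ t)⁻¹ * (((π.withDensity fun x => ENNReal.ofReal (g x)).bind
            (fun x => P t x)).rnDeriv π y).toReal - ∫ x, φ x * g x ∂π|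
          ≤ ε t * ((M - m) / 2) :=
  stmt_9_general P hPsub π l hl0 hQSD β hβac φ hφ ε hTV
end

section
/- Let $(X_t)$ be an absorbed Markov process with QSD $\pi$, and suppose: (i) for some time $t_2 > 0$ there is a submarkovian kernel $R$ with $\pi(dx)P_{t_2}(x,dy) = \pi(dy)R(y,dx)$; (ii) there is $C_2' < \infty$ with $\frac{R(y,\cdot)}{R1(y)} \le C_2'\pi(\cdot)$ for $\pi$-a.e. $y$; (iii) $\pi$ has full support; and (iv) $P_{t_2}$ is lower semicontinuous (maps bounded non-negative continuous functions to lower semicontinuous functions). Then $P_{t_2}(x,\cdot) \le \lambda^{t_2}C_2' \pi(\cdot)$ for every $x \in \chi$ (not merely $\pi$-a.e.). -/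
/-!
Time reversal turns the bound `R(y, ·) ≤ C₂' R1(y) π` into the bound `P(x, t) ≤ λ^{t₂} C₂' π(t)`
for π-a.e. `x`, since `R1 = λ^{t₂}` π-a.e. by quasi-stationarity. For an open set `U`, the
function `x ↦ P(x, U)` is a supremum of the lower semicontinuous functions `x ↦ P f` over
continuous `0 ≤ f ≤ 1` increasing to `1_U`, so the set where the bound fails is open and π-null,
hence empty by full support. Outer regularity of `π` then passes the bound to all Borel sets.
-/

open MeasureTheory ProbabilityTheory Filter Topology
open scoped ENNReal NNReal

theorem LowerSemicontinuous.le_of_ae_le {X β : Type*} [TopologicalSpace X] [MeasurableSpace X]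
    [LinearOrder β] {μ : Measure X} [μ.IsOpenPosMeasure] {g : X → β} (hg : LowerSemicontinuous g)
    {c : β} (h : ∀ᵐ x ∂μ, g x ≤ c) (x : X) : g x ≤ c := by
  by_contra! hx
  have hnull : μ {z | c < g z} = 0 := by
    simpa only [ae_iff, not_le] using h
  exact (hg.isOpen_preimage c).measure_ne_zero μ ⟨x, hx⟩ hnull

theorem MeasureTheory.Measure.le_of_forall_isOpen_le {X : Type*} [TopologicalSpace X]
    [MeasurableSpace X] {μ ν : Measure X} [ν.OuterRegular] (h : ∀ U, IsOpen U → μ U ≤ ν U) :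
    μ ≤ ν := by
  intro s
  rw [Set.measure_eq_iInf_isOpen s ν]
  exact le_iInf₂ fun U hsU => le_iInf fun hU => (measure_mono hsU).trans (h U hU)

theorem IsOpen.exists_monotone_continuous_iSup_ofReal_eq_indicator {Y : Type*}
    [PseudoMetricSpace Y] {U : Set Y} (hU : IsOpen U) :
    ∃ f : ℕ → Y → ℝ, Monotone f ∧ (∀ n, Continuous (f n)) ∧ (∀ n y, f n y ∈ Set.Icc 0 1) ∧
      ∀ y, ⨆ n, ENNReal.ofReal (f n y) = U.indicator 1 y := by
  have hδ : ∀ n : ℕ, (0 : ℝ) < 1 / (n + 1) := fun _ => Nat.one_div_pos_of_nat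
  set f : ℕ → Y → ℝ := fun n y => 1 - thickenedIndicator (hδ n) Uᶜ y
  have hmono : Monotone f := fun m n hmn y => by
    have := thickenedIndicator_mono (hδ n) (hδ m)
      (one_div_le_one_div_of_le (by positivity) (by exact_mod_cast Nat.add_le_add_right hmn 1))
      Uᶜ y
    simp only [f, sub_le_sub_iff_left]
    exact_mod_cast this
  refine ⟨f, hmono,
    fun n => continuous_const.sub (NNReal.continuous_coe.comp (thickenedIndicator _ _).continuous),
    fun n y => ⟨sub_nonneg.2 (by exact_mod_cast thickenedIndicator_le_one _ _ _),
      sub_le_self _ (NNReal.coe_nonneg _)⟩, fun y => ?_⟩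
  refine iSup_eq_of_tendsto (fun m n hmn => ENNReal.ofReal_le_ofReal (hmono hmn y)) ?_
  have hlim := tendsto_pi_nhds.1 (thickenedIndicator_tendsto_indicator_closure hδ
    tendsto_one_div_add_atTop_nhds_zero_nat Uᶜ) y
  rw [hU.isClosed_compl.closure_eq] at hlim
  have hcont : Continuous fun r : ℝ≥0 => ENNReal.ofReal (1 - r) :=
    ENNReal.continuous_ofReal.comp (continuous_const.sub NNReal.continuous_coe)
  have hind : U.indicator 1 y = ENNReal.ofReal (1 - Uᶜ.indicator (fun _ => (1 : ℝ≥0)) y) := by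
    by_cases hy : y ∈ U <;> simp [hy]
  rw [hind]
  exact (hcont.tendsto _).comp hlim

namespace ProbabilityTheory.Kernel

theorem lowerSemicontinuous_apply_of_isOpen {X Y : Type*} [TopologicalSpace X] [MeasurableSpace X]
    [PseudoMetricSpace Y] [MeasurableSpace Y] [OpensMeasurableSpace Y]
    (κ : Kernel X Y) [IsFiniteKernel κ]
    (hκ : ∀ f : Y → ℝ, Continuous f → (∀ y, 0 ≤ f y) → (∃ C, ∀ y, f y ≤ C) →
      LowerSemicontinuous fun x => ∫ y, f y ∂(κ x))
    {U : Set Y} (hU : IsOpen U) : LowerSemicontinuous fun x => κ x U := by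
  obtain ⟨f, hmono, hcont, hf01, hsup⟩ := hU.exists_monotone_continuous_iSup_ofReal_eq_indicator
  have hκU : ∀ x, κ x U = ⨆ n, ENNReal.ofReal (∫ y, f n y ∂(κ x)) := fun x => calc
    κ x U = ∫⁻ y, U.indicator 1 y ∂(κ x) := (lintegral_indicator_one hU.measurableSet).symm
    _ = ⨆ n, ∫⁻ y, ENNReal.ofReal (f n y) ∂(κ x) := by
      simp_rw [← hsup]
      exact lintegral_iSup (fun n => (hcont n).measurable.ennreal_ofReal)
        fun m n hmn y => ENNReal.ofReal_le_ofReal (hmono hmn y)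
    _ = ⨆ n, ENNReal.ofReal (∫ y, f n y ∂(κ x)) := by
      congr 1 with n
      refine (ofReal_integral_eq_lintegral_ofReal ?_ (ae_of_all _ fun y => (hf01 n y).1)).symm
      refine Integrable.of_bound (hcont n).aestronglyMeasurable 1 (ae_of_all _ fun y => ?_)
      rw [Real.norm_of_nonneg (hf01 n y).1]
      exact (hf01 n y).2
  simp_rw [hκU]
  exact lowerSemicontinuous_iSup fun n => ENNReal.continuous_ofReal.comp_lowerSemicontinuous
    (hκ (f n) (hcont n) (fun y => (hf01 n y).1) ⟨1, fun y => (hf01 n y).2⟩)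
    ENNReal.ofReal_mono

variable {α : Type*} [MeasurableSpace α]

/-- `π(dx) P(x, dy) = π(dy) R(y, dx)`, tested on measurable rectangles. -/
def IsTimeReversal (P R : Kernel α α) (π : Measure α) : Prop :=
  ∀ s t : Set α, MeasurableSet s → MeasurableSet t → ∫⁻ x in s, P x t ∂π = ∫⁻ y in t, R y s ∂π

variable {P R : Kernel α α} {π : Measure α} [SigmaFinite π]

theorem IsTimeReversal.ae_apply_univ_eq (hrev : IsTimeReversal P R π) {L : ℝ≥0∞}
    (hbind : π.bind (fun x => P x) = L • π) : ∀ᵐ y ∂π, R y Set.univ = L := by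
  refine ae_eq_of_forall_setLIntegral_eq_of_sigmaFinite (R.measurable_coe .univ)
    measurable_const fun t ht _ => ?_
  calc ∫⁻ y in t, R y Set.univ ∂π = ∫⁻ x, P x t ∂π := by
        rw [← hrev .univ t .univ ht, Measure.restrict_univ]
  _ = L * π t := by
        rw [← Measure.bind_apply ht P.measurable.aemeasurable, hbind, Measure.smul_apply,
          smul_eq_mul]
  _ = ∫⁻ _ in t, L ∂π := (MeasureTheory.setLIntegral_const t L).symm

theorem IsTimeReversal.ae_apply_le_of_ae_le (hrev : IsTimeReversal P R π) {K : ℝ≥0∞}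
    (hRK : ∀ᵐ y ∂π, ∀ s, MeasurableSet s → R y s ≤ K * π s) {t : Set α} (ht : MeasurableSet t) :
    ∀ᵐ x ∂π, P x t ≤ K * π t := by
  refine ae_le_of_forall_setLIntegral_le_of_sigmaFinite (P.measurable_coe ht) fun s hs _ => ?_
  calc ∫⁻ x in s, P x t ∂π = ∫⁻ y in t, R y s ∂π := hrev s t hs ht
  _ ≤ ∫⁻ _ in t, K * π s ∂π := setLIntegral_mono_ae (by fun_prop) <| by
        filter_upwards [hRK] with y hy _ using hy s hs
  _ = ∫⁻ _ in s, K * π t ∂π := by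
        rw [MeasureTheory.setLIntegral_const, MeasureTheory.setLIntegral_const, mul_right_comm]

end ProbabilityTheory.Kernel

theorem stmt_10_general {χ : Type*} [MetricSpace χ] [MeasurableSpace χ] [BorelSpace χ]
    (P R : Kernel χ χ)
    (hPsub : ∀ x, P x Set.univ ≤ 1)
    (π : Measure χ) [IsProbabilityMeasure π]
    (l : ℝ≥0∞) (hl1 : l ≤ 1)
    (t2 : ℝ) (ht2 : 0 < t2)
    (hQSD : π.bind (fun x => P x) = (l ^ t2) • π)
    (hrev : ∀ s t : Set χ, MeasurableSet s → MeasurableSet t →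
      ∫⁻ x in s, P x t ∂π = ∫⁻ y in t, R y s ∂π)
    (C2' : ℝ)
    (hC2' : ∀ᵐ y ∂π, ∀ s : Set χ, MeasurableSet s →
      R y s ≤ ENNReal.ofReal C2' * R y Set.univ * π s)
    (hsupp : ∀ U : Set χ, IsOpen U → U.Nonempty → 0 < π U)
    (hlsc : ∀ f : χ → ℝ, Continuous f → (∀ x, 0 ≤ f x) → (∃ C, ∀ x, f x ≤ C) →
      LowerSemicontinuous fun x => ∫ y, f y ∂(P x)) :
    ∀ x : χ, ∀ s : Set χ, MeasurableSet s →
      P x s ≤ l ^ t2 * ENNReal.ofReal C2' * π s := by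
  have : IsFiniteKernel P := ⟨⟨1, ENNReal.one_lt_top, hPsub⟩⟩
  have : π.IsOpenPosMeasure := ⟨fun U hU hne => (hsupp U hU hne).ne'⟩
  set K := l ^ t2 * ENNReal.ofReal C2'
  have hK : K ≠ ∞ := ENNReal.mul_ne_top
    ((ENNReal.rpow_le_one hl1 ht2.le).trans_lt ENNReal.one_lt_top).ne ENNReal.ofReal_ne_top
  have hRK : ∀ᵐ y ∂π, ∀ s, MeasurableSet s → R y s ≤ K * π s := by
    filter_upwards [hC2', Kernel.IsTimeReversal.ae_apply_univ_eq hrev hQSD] with y hy hmass s hs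
    simpa only [hmass, K, mul_comm (l ^ t2)] using hy s hs
  have hopen : ∀ x U, IsOpen U → P x U ≤ K * π U := fun x U hU =>
    (P.lowerSemicontinuous_apply_of_isOpen hlsc hU).le_of_ae_le
      (Kernel.IsTimeReversal.ae_apply_le_of_ae_le hrev hRK hU.measurableSet) x
  have : (K • π).OuterRegular := Measure.OuterRegular.smul π hK
  intro x s _
  exact Measure.le_of_forall_isOpen_le (ν := K • π) (hopen x) s

/-- if the time-reversal kernel `R` of `P_{t₂}` at quasi-stationarity
satisfies `R(y,·)/R1(y) ≤ C₂' π` for π-a.e. `y`, `π` has full support, and `P_{t₂}` is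
lower semicontinuous, then `P_{t₂}(x,·) ≤ λ^{t₂} C₂' π` for *every* `x ∈ χ`. -/
theorem stmt_10 {χ : Type*} [MetricSpace χ] [MeasurableSpace χ] [BorelSpace χ]
    (P R : Kernel χ χ)
    (hPsub : ∀ x, P x Set.univ ≤ 1) (hRsub : ∀ y, R y Set.univ ≤ 1)
    (π : Measure χ) [IsProbabilityMeasure π]
    (l : ℝ≥0∞) (hl0 : 0 < l) (hl1 : l ≤ 1)
    (t2 : ℝ) (ht2 : 0 < t2)
    (hQSD : π.bind (fun x => P x) = (l ^ t2) • π)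
    (hrev : ∀ s t : Set χ, MeasurableSet s → MeasurableSet t →
      ∫⁻ x in s, P x t ∂π = ∫⁻ y in t, R y s ∂π)
    (C2' : ℝ) (hC2'pos : 0 < C2')
    (hC2' : ∀ᵐ y ∂π, ∀ s : Set χ, MeasurableSet s →
      R y s ≤ ENNReal.ofReal C2' * R y Set.univ * π s)
    (hsupp : ∀ U : Set χ, IsOpen U → U.Nonempty → 0 < π U)
    (hlsc : ∀ f : χ → ℝ, Continuous f → (∀ x, 0 ≤ f x) → (∃ C, ∀ x, f x ≤ C) →
      LowerSemicontinuous fun x => ∫ y, f y ∂(P x)) :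
    ∀ x : χ, ∀ s : Set χ, MeasurableSet s →
      P x s ≤ l ^ t2 * ENNReal.ofReal C2' * π s :=
  stmt_10_general P R hPsub π l hl1 t2 ht2 hQSD hrev C2' hC2' hsupp hlsc
end

section
/- Suppose the killed Markov process $(X_t)$ satisfies: (i) the Champagnat–Villemonais condition (A1) at time $t_0$ with constant $c_0 > 0$ and measure $\nu$, i.e. $\mathcal{L}_x(X_{t_0} \mid \tau_\partial > t_0) \ge c_0\nu$ for all $x$; (ii) $\mathbb{P}_x(\tau_\partial > t) > 0$ for all $x, t$; and (iii) there exist $t_1 > 0$ and a bounded, everywhere strictly positive pointwise right eigenfunction $h \in \mathcal{B}_b(\chi;\mathbb{R}_{>0})$ with $P_{t_1}h = \hat{\lambda}h$ (necessarily $\hat{\lambda} > 0$). Then the process satisfies condition (A2): there exists a constant $K < \infty$ (one may take $K = \|h\|_\infty^2/(c_0\nu(h)^2)$) such that $\frac{\mathbb{P}_x(\tau_\partial > n t_1)}{\mathbb{P}_\nu(\tau_\partial > n t_1)} \le K$ for all $x \in \chi$ and all $n$ with $n t_1 \ge t_0$. -/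
open MeasureTheory ProbabilityTheory
open scoped ENNReal

/-!
Integrating the eigenfunction `h` against `P_{n t₁}(x, ·)` gives `λ̂ⁿ h(x)`. Splitting
`n t₁ = (n t₁ - t₀) + t₀` and applying the Doeblin minorisation (A1) at the last step bounds this
from below by `c₀ ν(h) ℙ_x(τ_∂ > n t₁)`; integrating it against `ν` and using `h ≤ ‖h‖_∞` bounds
`λ̂ⁿ ν(h)` from above by `‖h‖_∞ ℙ_ν(τ_∂ > n t₁)`. Eliminating `λ̂ⁿ` gives (A2).
-/

theorem const_mul_lintegral_le_lintegral_of_forall_le {α : Type*} [MeasurableSpace α]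
    {μ ν : Measure α} {c : ℝ≥0∞} (h : ∀ s, MeasurableSet s → c * ν s ≤ μ s) (f : α → ℝ≥0∞) :
    c * ∫⁻ x, f x ∂ν ≤ ∫⁻ x, f x ∂μ := by
  have hle : c • ν ≤ μ := Measure.le_iff.mpr fun s hs => h s hs
  rw [← smul_eq_mul, ← lintegral_smul_measure]
  exact lintegral_mono' hle le_rfl

theorem ENNReal.le_ofReal_div_mul_of_mul_le {X V : ℝ≥0∞} {c a C : ℝ} (hc : 0 < c) (ha : 0 < a)
    (hC : 0 ≤ C)
    (h : ENNReal.ofReal c * ENNReal.ofReal a ^ 2 * X ≤ ENNReal.ofReal C ^ 2 * V) :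
    X ≤ ENNReal.ofReal (C ^ 2 / (c * a ^ 2)) * V := by
  have hne : ENNReal.ofReal c * ENNReal.ofReal a ^ 2 ≠ 0 := by positivity
  have htop : ENNReal.ofReal c * ENNReal.ofReal a ^ 2 ≠ ⊤ := by finiteness
  rw [ENNReal.ofReal_div_of_pos (by positivity), ENNReal.ofReal_mul hc.le, ENNReal.ofReal_pow hC,
    ENNReal.ofReal_pow ha.le, div_eq_mul_inv, mul_right_comm, ← div_eq_mul_inv,
    ENNReal.le_div_iff_mul_le (.inl hne) (.inl htop), mul_comm]
  exact h

theorem mul_lintegral_le_mul_lintegral_kernel_univ {α : Type*} [MeasurableSpace α]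
    {κ : Kernel α α} {ν : Measure α} {H : α → ℝ≥0∞} (hH : Measurable H) {C M : ℝ≥0∞}
    (hHC : ∀ y, H y ≤ C) (heig : ∀ y, ∫⁻ z, H z ∂κ y = M * H y) :
    M * ∫⁻ y, H y ∂ν ≤ C * ∫⁻ y, κ y Set.univ ∂ν := by
  rw [← lintegral_const_mul _ hH, ← lintegral_const_mul _ (κ.measurable_coe .univ)]
  refine lintegral_mono fun y => ?_
  rw [← heig, ← lintegral_const]
  exact lintegral_mono fun z => hHC z

section Semigroup

variable {χ : Type*} [MeasurableSpace χ] {P : ℝ → Kernel χ χ}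
  (hsemi : ∀ s t : ℝ, 0 ≤ s → 0 ≤ t → ∀ x, ∀ u : Set χ, MeasurableSet u →
    P (s + t) x u = ∫⁻ y, P t y u ∂(P s x))
include hsemi

theorem kernel_add_eq_comp {s t : ℝ} (hs : 0 ≤ s) (ht : 0 ≤ t) : P (s + t) = P t ∘ₖ P s := by
  ext x u hu
  rw [Kernel.comp_apply' _ _ _ hu, hsemi s t hs ht x u hu]

theorem lintegral_kernel_add {s t : ℝ} (hs : 0 ≤ s) (ht : 0 ≤ t) {f : χ → ℝ≥0∞}
    (hf : Measurable f) (x : χ) :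
    ∫⁻ z, f z ∂P (s + t) x = ∫⁻ y, ∫⁻ z, f z ∂P t y ∂P s x := by
  rw [kernel_add_eq_comp hsemi hs ht, Kernel.lintegral_comp _ _ _ hf]

theorem lintegral_kernel_natCast_mul_eq_pow_mul {t : ℝ} (ht : 0 ≤ t) {H : χ → ℝ≥0∞}
    (hH : Measurable H) {L : ℝ≥0∞} (heig : ∀ y, ∫⁻ z, H z ∂P t y = L * H y) {n : ℕ}
    (hn : 1 ≤ n) (y : χ) :
    ∫⁻ z, H z ∂P (n * t) y = L ^ n * H y := by
  induction n, hn using Nat.le_induction generalizing y with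
  | base => simpa using heig y
  | succ n hn ih =>
    have hsplit : ((n + 1 : ℕ) : ℝ) * t = n * t + t := by push_cast; ring
    rw [hsplit, lintegral_kernel_add hsemi (by positivity) ht hH]
    simp_rw [heig]
    rw [lintegral_const_mul _ hH, ih, pow_succ]
    ring

theorem const_mul_lintegral_mul_le_lintegral_kernel {ν : Measure χ} {c : ℝ≥0∞} {t₀ T : ℝ}
    (hA1 : ∀ x, ∀ s : Set χ, MeasurableSet s → c * ν s * P t₀ x Set.univ ≤ P t₀ x s)
    (ht₀ : 0 ≤ t₀) (hT : t₀ ≤ T) {f : χ → ℝ≥0∞} (hf : Measurable f) (x : χ) :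
    c * (∫⁻ y, f y ∂ν) * P T x Set.univ ≤ ∫⁻ y, f y ∂P T x := by
  have hsplit : T = (T - t₀) + t₀ := by ring
  have hs : 0 ≤ T - t₀ := by linarith
  have hminor : ∀ y, c * P t₀ y Set.univ * ∫⁻ z, f z ∂ν ≤ ∫⁻ z, f z ∂P t₀ y := fun y =>
    const_mul_lintegral_le_lintegral_of_forall_le
      (fun s hs => by rw [mul_right_comm]; exact hA1 y s hs) f
  calc c * (∫⁻ y, f y ∂ν) * P T x Set.univ
      = ∫⁻ y, c * (∫⁻ z, f z ∂ν) * P t₀ y Set.univ ∂P (T - t₀) x := by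
        rw [lintegral_const_mul _ (Kernel.measurable_coe _ .univ), hsplit,
          hsemi _ _ hs ht₀ x _ .univ, add_sub_cancel_right]
    _ ≤ ∫⁻ y, ∫⁻ z, f z ∂P t₀ y ∂P (T - t₀) x :=
        lintegral_mono fun y => (mul_right_comm _ _ _).trans_le (hminor y)
    _ = ∫⁻ y, f y ∂P T x := by
        rw [hsplit, lintegral_kernel_add hsemi hs ht₀ hf, add_sub_cancel_right]

end Semigroup

theorem stmt_15_general {χ : Type*} [MeasurableSpace χ]
    (P : ℝ → Kernel χ χ)
    (hPsub : ∀ t x, P t x Set.univ ≤ 1)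
    (hsemi : ∀ s t : ℝ, 0 ≤ s → 0 ≤ t → ∀ x, ∀ u : Set χ, MeasurableSet u →
      P (s + t) x u = ∫⁻ y, P t y u ∂(P s x))
    (t0 : ℝ) (ht0 : 0 < t0) (c0 : ℝ) (hc0 : 0 < c0)
    (ν : Measure χ) [IsProbabilityMeasure ν]
    (hA1 : ∀ x, ∀ s : Set χ, MeasurableSet s →
      ENNReal.ofReal c0 * ν s * P t0 x Set.univ ≤ P t0 x s)
    (t1 : ℝ) (ht1 : 0 < t1)
    (h : χ → ℝ) (hhm : Measurable h) (hhpos : ∀ x, 0 < h x)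
    (Ch : ℝ) (hhbd : ∀ x, h x ≤ Ch)
    (lhat : ℝ)
    (heig : ∀ x, ∫ y, h y ∂(P t1 x) = lhat * h x) :
    ∀ x, ∀ n : ℕ, t0 ≤ (n : ℝ) * t1 →
      P ((n : ℝ) * t1) x Set.univ
        ≤ ENNReal.ofReal (Ch ^ 2 / (c0 * (∫ y, h y ∂ν) ^ 2))
            * ∫⁻ y, P ((n : ℝ) * t1) y Set.univ ∂ν := by
  intro x n hn
  have hfin (t : ℝ) (y : χ) : IsFiniteMeasure (P t y) := ⟨(hPsub t y).trans_lt ENNReal.one_lt_top⟩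
  have hint (μ : Measure χ) [IsFiniteMeasure μ] : Integrable h μ :=
    .of_bound hhm.aestronglyMeasurable Ch <| ae_of_all _ fun y => by
      rw [Real.norm_of_nonneg (hhpos y).le]; exact hhbd y
  have hνh : 0 < ∫ y, h y ∂ν :=
    (integral_pos_iff_support_of_nonneg (fun y => (hhpos y).le) (hint ν)).mpr
      (by simp [Function.support_eq_univ fun y => (hhpos y).ne'])
  set H : χ → ℝ≥0∞ := fun y => ENNReal.ofReal (h y)
  have hHm : Measurable H := hhm.ennreal_ofReal
  have hH (μ : Measure χ) [IsFiniteMeasure μ] : ∫⁻ y, H y ∂μ = ENNReal.ofReal (∫ y, h y ∂μ) :=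
    (ofReal_integral_eq_lintegral_ofReal (hint μ) (ae_of_all _ fun y => (hhpos y).le)).symm
  have heigH (y : χ) : ∫⁻ z, H z ∂P t1 y = ENNReal.ofReal lhat * H y := by
    rw [hH, heig, ENNReal.ofReal_mul' (hhpos y).le]
  have hn1 : 1 ≤ n := Nat.one_le_iff_ne_zero.mpr <| by rintro rfl; simp at hn; linarith
  have hiter := lintegral_kernel_natCast_mul_eq_pow_mul hsemi ht1.le hHm heigH hn1
  set L := ENNReal.ofReal lhat
  set a := ∫⁻ y, H y ∂ν
  have ha : a = ENNReal.ofReal (∫ y, h y ∂ν) := hH ν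
  set T := (n : ℝ) * t1
  refine ENNReal.le_ofReal_div_mul_of_mul_le hc0 hνh ((hhpos x).le.trans (hhbd x)) ?_
  calc ENNReal.ofReal c0 * ENNReal.ofReal (∫ y, h y ∂ν) ^ 2 * P T x Set.univ
      = ENNReal.ofReal c0 * a * P T x Set.univ * a := by rw [← ha]; ring
    _ ≤ L ^ n * H x * a := by
        gcongr ?_ * a
        exact (const_mul_lintegral_mul_le_lintegral_kernel hsemi hA1 ht0.le hn hHm x).trans_eq
          (hiter x)
    _ ≤ ENNReal.ofReal Ch * (L ^ n * a) := by
        rw [mul_right_comm, mul_comm]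
        gcongr
        exact ENNReal.ofReal_le_ofReal (hhbd x)
    _ ≤ ENNReal.ofReal Ch * (ENNReal.ofReal Ch * ∫⁻ y, P T y Set.univ ∂ν) := by
        gcongr ENNReal.ofReal Ch * ?_
        exact mul_lintegral_le_mul_lintegral_kernel_univ hHm
          (fun z => ENNReal.ofReal_le_ofReal (hhbd z)) hiter
    _ = ENNReal.ofReal Ch ^ 2 * ∫⁻ y, P T y Set.univ ∂ν := by ring

/-- condition (A1) together with a bounded, everywhere strictly positive
pointwise right eigenfunction `h` of `P_{t₁}` implies condition (A2):
`ℙ_x(τ_∂ > n t₁) ≤ K · ℙ_ν(τ_∂ > n t₁)` for all `x` and all `n` with `n t₁ ≥ t₀`,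
with `K = ‖h‖_∞² / (c₀ ν(h)²)`. -/
theorem stmt_15 {χ : Type*} [MeasurableSpace χ]
    (P : ℝ → Kernel χ χ)
    (hPsub : ∀ t x, P t x Set.univ ≤ 1)
    (hsemi : ∀ s t : ℝ, 0 ≤ s → 0 ≤ t → ∀ x, ∀ u : Set χ, MeasurableSet u →
      P (s + t) x u = ∫⁻ y, P t y u ∂(P s x))
    (hpos : ∀ x, ∀ t : ℝ, 0 ≤ t → 0 < P t x Set.univ)
    (t0 : ℝ) (ht0 : 0 < t0) (c0 : ℝ) (hc0 : 0 < c0)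
    (ν : Measure χ) [IsProbabilityMeasure ν]
    (hA1 : ∀ x, ∀ s : Set χ, MeasurableSet s →
      ENNReal.ofReal c0 * ν s * P t0 x Set.univ ≤ P t0 x s)
    (t1 : ℝ) (ht1 : 0 < t1)
    (h : χ → ℝ) (hhm : Measurable h) (hhpos : ∀ x, 0 < h x)
    (Ch : ℝ) (hhbd : ∀ x, h x ≤ Ch)
    (lhat : ℝ)
    (heig : ∀ x, ∫ y, h y ∂(P t1 x) = lhat * h x) :
    ∀ x, ∀ n : ℕ, t0 ≤ (n : ℝ) * t1 →
      P ((n : ℝ) * t1) x Set.univ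
        ≤ ENNReal.ofReal (Ch ^ 2 / (c0 * (∫ y, h y ∂ν) ^ 2))
            * ∫⁻ y, P ((n : ℝ) * t1) y Set.univ ∂ν :=
  stmt_15_general P hPsub hsemi t0 ht0 c0 hc0 ν hA1 t1 ht1 h hhm hhpos Ch hhbd lhat heig
end

section
/- Let $\pi$ be a QSD for the killed process $(X_t)$ with bounded strictly positive pointwise right eigenfunction $h$ ($P_t h = \lambda^t h$, $\pi(h) = 1$), and let $(Q_t)$ be the $Q$-process transition kernel $Q_t(x,dy) := \frac{h(y)\lambda^{-t}}{h(x)}P_t(x,dy)$ with stationary distribution $\beta(dx) := h(x)\pi(dx)$. If there exist $t_0 > 0$ and a submarkovian kernel $R$ with $\pi(dx)P_{t_0}(x,dy) = \pi(dy)R(y,dx)$, then $\beta(dx)Q_{t_0}(x,dy) = \beta(dy)\,\lambda^{-t_0}R(y,dx)$; in particular the $Q$-process satisfies the reverse-kernel identity with reverse kernel $\lambda^{-t_0}R$, which is Markovian ($\lambda^{-t_0}R1 = 1$ $\beta$-a.e.). -/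
/-!
The reverse-kernel identity for `P_{t₀}` says that the measure `π(dx) P_{t₀}(x,dy)` on `χ × χ`
is the image of `π(dy) R(y,dx)` under swapping the coordinates. Multiplying both by `h(y)`
turns the left one into `λ^{t₀} β(dx) Q_{t₀}(x,dy)` and the right one into `β(dy) R(y,dx)`,
which is the first claim. Taking `s = χ` in the identity and using `π P_{t₀} = λ^{t₀} π` gives
`∫_t R1 dπ = λ^{t₀} π(t)` for every `t`, so `R1 = λ^{t₀}` `π`-a.e., hence `β`-a.e. since `β ≪ π`.
-/

open MeasureTheory ProbabilityTheory
open scoped ENNReal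

namespace ProbabilityTheory.Kernel

variable {χ : Type*} [MeasurableSpace χ]

/-- `π(dx) P(x,dy) = π(dy) R(y,dx)`, tested on rectangles `s × t`. -/
def IsReversal (π : Measure χ) (P R : Kernel χ χ) : Prop :=
  ∀ s t : Set χ, MeasurableSet s → MeasurableSet t →
    ∫⁻ x in s, P x t ∂π = ∫⁻ y in t, R y s ∂π

namespace IsReversal

variable {π : Measure χ} {P R : Kernel χ χ}

theorem bind_restrict (hPR : IsReversal π P R) {s : Set χ} (hs : MeasurableSet s) :
    (π.restrict s).bind P = π.withDensity fun y => R y s := by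
  ext t ht
  rw [Measure.bind_apply ht P.aemeasurable, withDensity_apply _ ht]
  exact hPR s t hs ht

theorem setLIntegral_setLIntegral (hPR : IsReversal π P R) {f : χ → ℝ≥0∞}
    (hf : Measurable f) {s t : Set χ} (hs : MeasurableSet s) (ht : MeasurableSet t) :
    ∫⁻ x in s, ∫⁻ y in t, f y ∂P x ∂π = ∫⁻ y in t, f y * R y s ∂π := by
  calc ∫⁻ x in s, ∫⁻ y in t, f y ∂P x ∂π
      = ∫⁻ y, t.indicator f y ∂(π.restrict s).bind P := by
        rw [Measure.lintegral_bind P.aemeasurable (hf.indicator ht).aemeasurable]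
        simp_rw [lintegral_indicator ht]
    _ = ∫⁻ y, t.indicator f y * R y s ∂π := by
        rw [hPR.bind_restrict hs,
          lintegral_withDensity_eq_lintegral_mul _ (R.measurable_coe hs) (hf.indicator ht)]
        simp_rw [Pi.mul_apply, mul_comm]
    _ = ∫⁻ y in t, f y * R y s ∂π := by
        rw [← lintegral_indicator ht]
        simp_rw [Set.indicator_mul_left]

theorem setLIntegral_hTransform (hPR : IsReversal π P R) {H : χ → ℝ≥0∞} (hH : Measurable H)
    (hH0 : ∀ x, H x ≠ 0) (hHtop : ∀ x, H x ≠ ∞) {c : ℝ≥0∞} {Q : Kernel χ χ}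
    (hQ : ∀ x, ∀ s : Set χ, MeasurableSet s → Q x s = c * (H x)⁻¹ * ∫⁻ y in s, H y ∂P x)
    {s t : Set χ} (hs : MeasurableSet s) (ht : MeasurableSet t) :
    ∫⁻ x in s, Q x t ∂π.withDensity H = ∫⁻ y in t, c * R y s ∂π.withDensity H := by
  have hHQ : ∀ x, H x * Q x t = ∫⁻ y in t, c * H y ∂P x := fun x => by
    rw [hQ x t ht, lintegral_const_mul _ hH, ← mul_assoc, ← mul_assoc, mul_right_comm (H x),
      ENNReal.mul_inv_cancel (hH0 x) (hHtop x), one_mul]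
  calc ∫⁻ x in s, Q x t ∂π.withDensity H
      = ∫⁻ x in s, ∫⁻ y in t, c * H y ∂P x ∂π := by
        simp_rw [setLIntegral_withDensity_eq_setLIntegral_mul _ hH (Q.measurable_coe ht) hs,
          Pi.mul_apply, hHQ]
    _ = ∫⁻ y in t, c * H y * R y s ∂π := hPR.setLIntegral_setLIntegral (hH.const_mul c) hs ht
    _ = ∫⁻ y in t, c * R y s ∂π.withDensity H := by
        rw [setLIntegral_withDensity_eq_setLIntegral_mul _ hH
          ((R.measurable_coe hs).const_mul c) ht]
        simp_rw [Pi.mul_apply, mul_left_comm, mul_assoc]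

theorem ae_mass_eq [SigmaFinite π] (hPR : IsReversal π P R) {c : ℝ≥0∞}
    (hbind : π.bind P = c • π) : ∀ᵐ y ∂π, R y Set.univ = c := by
  refine ae_eq_of_forall_setLIntegral_eq_of_sigmaFinite (R.measurable_coe .univ)
    measurable_const fun t ht _ => ?_
  rw [← hPR _ t .univ ht, Measure.restrict_univ, ← Measure.bind_apply ht P.aemeasurable,
    hbind, MeasureTheory.setLIntegral_const, Measure.smul_apply, smul_eq_mul, mul_comm]

end IsReversal

end ProbabilityTheory.Kernel

open ProbabilityTheory.Kernel in
theorem stmt_16_general {χ : Type*} [MeasurableSpace χ]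
    (P : Kernel χ χ)
    (π : Measure χ) [IsProbabilityMeasure π]
    (lam : ℝ) (hl0 : 0 < lam)
    (t0 : ℝ)
    (hQSD : π.bind (fun x => P x) = ENNReal.ofReal (lam ^ t0) • π)
    (h : χ → ℝ) (hhm : Measurable h) (hhpos : ∀ x, 0 < h x)
    (Q : Kernel χ χ)
    (hQ : ∀ x, ∀ s : Set χ, MeasurableSet s →
      Q x s = (ENNReal.ofReal (lam ^ t0))⁻¹ * (ENNReal.ofReal (h x))⁻¹ *
        ∫⁻ y in s, ENNReal.ofReal (h y) ∂(P x))
    (R : Kernel χ χ)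
    (hrev : ∀ s t : Set χ, MeasurableSet s → MeasurableSet t →
      ∫⁻ x in s, P x t ∂π = ∫⁻ y in t, R y s ∂π) :
    (∀ s t : Set χ, MeasurableSet s → MeasurableSet t →
      ∫⁻ x in s, Q x t ∂(π.withDensity fun z => ENNReal.ofReal (h z))
        = ∫⁻ y in t, (ENNReal.ofReal (lam ^ t0))⁻¹ * R y s
            ∂(π.withDensity fun z => ENNReal.ofReal (h z))) ∧
    ∀ᵐ y ∂(π.withDensity fun z => ENNReal.ofReal (h z)),
      (ENNReal.ofReal (lam ^ t0))⁻¹ * R y Set.univ = 1 := by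
  have hPR : IsReversal π P R := hrev
  have hΛ0 : ENNReal.ofReal (lam ^ t0) ≠ 0 :=
    (ENNReal.ofReal_pos.2 (Real.rpow_pos_of_pos hl0 t0)).ne'
  refine ⟨fun s t hs ht => hPR.setLIntegral_hTransform hhm.ennreal_ofReal
    (fun x => (ENNReal.ofReal_pos.2 (hhpos x)).ne') (fun _ => ENNReal.ofReal_ne_top) hQ hs ht, ?_⟩
  filter_upwards [(withDensity_absolutelyContinuous π _).ae_le (hPR.ae_mass_eq hQSD)] with y hy
  rw [hy, ENNReal.inv_mul_cancel hΛ0 ENNReal.ofReal_ne_top]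

/-- if `R` is a reverse kernel for `P_{t₀}` at quasi-stationarity,
then the `Q`-process kernel `Q_{t₀}(x,dy) = h(y) λ^{-t₀} / h(x) · P_{t₀}(x,dy)` with
stationary distribution `β = h π` satisfies
`β(dx) Q_{t₀}(x,dy) = β(dy) λ^{-t₀} R(y,dx)`, and `λ^{-t₀} R` is Markovian:
`λ^{-t₀} R1 = 1` β-a.e. -/
theorem stmt_16 {χ : Type*} [MeasurableSpace χ]
    (P : Kernel χ χ) [IsSFiniteKernel P] (hPsub : ∀ x, P x Set.univ ≤ 1)
    (π : Measure χ) [IsProbabilityMeasure π]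
    (lam : ℝ) (hl0 : 0 < lam) (hl1 : lam ≤ 1)
    (t0 : ℝ) (ht0 : 0 < t0)
    (hQSD : π.bind (fun x => P x) = ENNReal.ofReal (lam ^ t0) • π)
    (h : χ → ℝ) (hhm : Measurable h) (hhpos : ∀ x, 0 < h x)
    (hhbd : ∃ C, ∀ x, h x ≤ C)
    (heig : ∀ x, ∫ y, h y ∂(P x) = lam ^ t0 * h x)
    (hnorm : ∫ x, h x ∂π = 1)
    (Q : Kernel χ χ)
    (hQ : ∀ x, ∀ s : Set χ, MeasurableSet s →
      Q x s = (ENNReal.ofReal (lam ^ t0))⁻¹ * (ENNReal.ofReal (h x))⁻¹ *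
        ∫⁻ y in s, ENNReal.ofReal (h y) ∂(P x))
    (R : Kernel χ χ) (hRsub : ∀ y, R y Set.univ ≤ 1)
    (hrev : ∀ s t : Set χ, MeasurableSet s → MeasurableSet t →
      ∫⁻ x in s, P x t ∂π = ∫⁻ y in t, R y s ∂π) :
    (∀ s t : Set χ, MeasurableSet s → MeasurableSet t →
      ∫⁻ x in s, Q x t ∂(π.withDensity fun z => ENNReal.ofReal (h z))
        = ∫⁻ y in t, (ENNReal.ofReal (lam ^ t0))⁻¹ * R y s
            ∂(π.withDensity fun z => ENNReal.ofReal (h z))) ∧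
    ∀ᵐ y ∂(π.withDensity fun z => ENNReal.ofReal (h z)),
      (ENNReal.ofReal (lam ^ t0))⁻¹ * R y Set.univ = 1 :=
  stmt_16_general P π lam hl0 t0 hQSD h hhm hhpos Q hQ R hrev
end
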